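/- arXiv:2011.13166 — 2 statements merged into one kernel-verified Lean document; each statement's English description precedes it below -/
import Mathlib

section
/- Under the stated assumptions, the rescaled bias of the two-query gradient estimator has the exact limit lim_{c→0⁺} c⁻²·(E[ĝ(θ,c)] − ∇L(θ)) = (1/6)·E[ D³L(θ)(Δ,Δ,Δ) · φ(Δ) ] for every θ ∈ ℝ^d, where D³L(θ)(Δ,Δ,Δ) is the third derivative of L at θ evaluated at the triple (Δ,Δ,Δ). -/
open MeasureTheory Filter Topology Set
open scoped RealInnerProductSpace

/-!
Along the line `t ↦ L (θ + t • Δ)`, Taylor's theorem with Lagrange remainder gives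
`L (θ + c Δ) - L (θ - c Δ) = 2c DL(θ) Δ + (c³/3) D³L(θ + ξ Δ)(Δ, Δ, Δ)` for some `|ξ| < c`.
In expectation, `E[φ(Δ) Δᵀ] = I` turns the first-order term into `∇L(θ)`, the noise term vanishes
because `φ(Δ)` is `σ(Δ)`-measurable, and the rescaled remainder, dominated by
`D₁ ‖Δ‖³ ‖φ(Δ)‖ / 6`, converges by dominated convergence since `ξ → 0`.
-/

theorem exists_taylor_two_lagrange {f : ℝ → ℝ} (hf : ContDiff ℝ 3 f) {x : ℝ} (hx : x ≠ 0) :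
    ∃ ξ ∈ uIoo 0 x, f x = f 0 + deriv f 0 * x + iteratedDeriv 2 f 0 * x ^ 2 / 2 +
      iteratedDeriv 3 f ξ * x ^ 3 / 6 := by
  obtain ⟨ξ, hξ, h⟩ := taylor_mean_remainder_lagrange_iteratedDeriv (n := 2) hx.symm hf.contDiffOn
  refine ⟨ξ, hξ, ?_⟩
  have hwithin : ∀ k ≤ 3, iteratedDerivWithin k f (uIcc 0 x) 0 = iteratedDeriv k f 0 :=
    fun k hk ↦ iteratedDerivWithin_eq_iteratedDeriv (uniqueDiffOn_uIcc hx.symm)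
      (hf.contDiffAt.of_le (by exact_mod_cast hk)) left_mem_uIcc
  rw [taylor_within_apply] at h
  simp only [Finset.sum_range_succ, Finset.sum_range_zero, hwithin 0 (by norm_num),
    hwithin 1 (by norm_num), hwithin 2 (by norm_num), iteratedDeriv_zero, iteratedDeriv_one] at h
  norm_num [Nat.factorial] at h
  linarith

/-- The two Taylor expansions at `±c` differ by `c³/6` times a sum of two values of `f'''`,
which the intermediate value theorem merges into one. -/
theorem exists_sub_sub_deriv_eq_iteratedDeriv_three {f : ℝ → ℝ} (hf : ContDiff ℝ 3 f) {c : ℝ}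
    (hc : 0 < c) :
    ∃ ξ ∈ Ioo (-c) c, f c - f (-c) - 2 * c * deriv f 0 = c ^ 3 / 3 * iteratedDeriv 3 f ξ := by
  obtain ⟨ξ₁, hξ₁, hpos⟩ := exists_taylor_two_lagrange hf hc.ne'
  obtain ⟨ξ₂, hξ₂, hneg⟩ := exists_taylor_two_lagrange hf (neg_ne_zero.2 hc.ne')
  rw [uIoo_of_le hc.le] at hξ₁
  rw [uIoo_of_ge (neg_nonpos.2 hc.le)] at hξ₂
  obtain ⟨ξ, hξ, hmid⟩ : ∃ ξ ∈ uIcc ξ₂ ξ₁,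
      iteratedDeriv 3 f ξ = (iteratedDeriv 3 f ξ₂ + iteratedDeriv 3 f ξ₁) / 2 := by
    refine intermediate_value_uIcc (hf.continuous_iteratedDeriv 3 le_rfl).continuousOn ?_
    rw [mem_uIcc]
    rcases le_total (iteratedDeriv 3 f ξ₂) (iteratedDeriv 3 f ξ₁) with h | h
    · exact Or.inl ⟨by linarith, by linarith⟩
    · exact Or.inr ⟨by linarith, by linarith⟩
  rw [uIcc_of_le (hξ₂.2.trans hξ₁.1).le] at hξ
  refine ⟨ξ, ⟨hξ₂.1.trans_le hξ.1, hξ.2.trans_lt hξ₁.2⟩, ?_⟩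
  rw [hmid, hpos, hneg]
  ring

theorem iteratedDeriv_comp_add_smul {𝕜 E F : Type*} [NontriviallyNormedField 𝕜]
    [NormedAddCommGroup E] [NormedSpace 𝕜 E] [NormedAddCommGroup F] [NormedSpace 𝕜 F]
    {n : ℕ} {f : E → F} (hf : ContDiff 𝕜 n f) (x v : E) (t : 𝕜) :
    iteratedDeriv n (fun s : 𝕜 ↦ f (x + s • v)) t =
      iteratedFDeriv 𝕜 n f (x + t • v) fun _ ↦ v := by
  have hline : (fun s : 𝕜 ↦ f (x + s • v)) =
      (fun z ↦ f (x + z)) ∘ ContinuousLinearMap.smulRight (1 : 𝕜 →L[𝕜] 𝕜) v := by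
    ext s; simp
  have hshift : ContDiff 𝕜 n (fun z ↦ f (x + z)) := hf.comp (contDiff_const.add contDiff_id)
  rw [iteratedDeriv_eq_iteratedFDeriv, hline,
    ContinuousLinearMap.iteratedFDeriv_comp_right _ hshift _ le_rfl]
  simp [iteratedFDeriv_comp_add_left]

section CentralDifference

variable {E : Type*} [NormedAddCommGroup E] [NormedSpace ℝ E]

noncomputable def centralDifferenceRemainder (L : E → ℝ) (θ v : E) (c : ℝ) : ℝ :=
  (L (θ + c • v) - L (θ - c • v) - 2 * c * fderiv ℝ L θ v) / (2 * c ^ 3)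

variable {L : E → ℝ}

theorem exists_centralDifferenceRemainder_eq (hL : ContDiff ℝ 3 L) (θ v : E) {c : ℝ}
    (hc : 0 < c) :
    ∃ ξ ∈ Ioo (-c) c,
      centralDifferenceRemainder L θ v c = iteratedFDeriv ℝ 3 L (θ + ξ • v) (fun _ ↦ v) / 6 := by
  have hline : ContDiff ℝ 3 fun t : ℝ ↦ L (θ + t • v) :=
    hL.comp (contDiff_const.add (contDiff_id.smul contDiff_const))
  obtain ⟨ξ, hξ, h⟩ := exists_sub_sub_deriv_eq_iteratedDeriv_three hline hc
  refine ⟨ξ, hξ, ?_⟩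
  have hderiv : deriv (fun t : ℝ ↦ L (θ + t • v)) 0 = fderiv ℝ L θ v := by
    simpa using iteratedDeriv_comp_add_smul (n := 1) (hL.of_le (by norm_num)) θ v 0
  rw [iteratedDeriv_comp_add_smul hL, hderiv] at h
  simp only [neg_smul, ← sub_eq_add_neg] at h
  rw [centralDifferenceRemainder, h]
  field_simp
  ring

theorem continuous_centralDifferenceRemainder (hL : ContDiff ℝ 3 L) (θ : E) (c : ℝ) :
    Continuous fun v ↦ centralDifferenceRemainder L θ v c := by
  have := hL.continuous
  unfold centralDifferenceRemainder
  fun_prop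

theorem abs_centralDifferenceRemainder_le (hL : ContDiff ℝ 3 L) {C : ℝ}
    (hC : ∀ x, ‖iteratedFDeriv ℝ 3 L x‖ ≤ C) (θ v : E) {c : ℝ} (hc : 0 < c) :
    |centralDifferenceRemainder L θ v c| ≤ C * ‖v‖ ^ 3 / 6 := by
  obtain ⟨ξ, -, h⟩ := exists_centralDifferenceRemainder_eq hL θ v hc
  rw [h, abs_div, abs_of_pos (by norm_num : (0 : ℝ) < 6)]
  gcongr
  calc |iteratedFDeriv ℝ 3 L (θ + ξ • v) (fun _ ↦ v)|
      ≤ ‖iteratedFDeriv ℝ 3 L (θ + ξ • v)‖ * ‖v‖ ^ 3 :=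
        (iteratedFDeriv ℝ 3 L (θ + ξ • v)).le_opNorm_mul_pow_of_le (pi_norm_const_le v)
    _ ≤ C * ‖v‖ ^ 3 := by gcongr; exact hC _

theorem tendsto_centralDifferenceRemainder (hL : ContDiff ℝ 3 L) (θ v : E) :
    Tendsto (centralDifferenceRemainder L θ v) (𝓝[>] 0)
      (𝓝 (iteratedFDeriv ℝ 3 L θ (fun _ ↦ v) / 6)) := by
  have hcont : Continuous fun t : ℝ ↦ iteratedFDeriv ℝ 3 L (θ + t • v) (fun _ ↦ v) / 6 := by
    have := hL.continuous_iteratedFDeriv (m := 3) le_rfl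
    fun_prop
  rw [Metric.tendsto_nhdsWithin_nhds]
  intro ε hε
  obtain ⟨δ, hδ, hball⟩ := Metric.continuous_iff.1 hcont 0 ε hε
  refine ⟨δ, hδ, fun c hc hcδ ↦ ?_⟩
  obtain ⟨ξ, hξ, h⟩ := exists_centralDifferenceRemainder_eq hL θ v hc
  have hξδ : dist ξ 0 < δ := by
    rw [Real.dist_eq, sub_zero, abs_lt]
    rw [Real.dist_eq, sub_zero, abs_of_pos hc] at hcδ
    exact ⟨by linarith [hξ.1], by linarith [hξ.2]⟩
  simpa [h] using hball ξ hξδ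

theorem div_two_mul_smul_eq_centralDifferenceRemainder {F : Type*} [AddCommGroup F] [Module ℝ F]
    (L : E → ℝ) (θ v : E) (a b : ℝ) (w : F) {c : ℝ} (hc : c ≠ 0) :
    ((L (θ + c • v) + a - L (θ - c • v) - b) / (2 * c)) • w =
      c ^ 2 • (centralDifferenceRemainder L θ v c • w) + fderiv ℝ L θ v • w +
        (2 * c)⁻¹ • ((a - b) • w) := by
  rw [smul_smul, smul_smul, ← add_smul, ← add_smul, centralDifferenceRemainder]
  congr 1
  field_simp
  ring

variable {Ω F : Type*} {m0 : MeasurableSpace Ω} {μ : Measure Ω} [NormedAddCommGroup F]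
  [NormedSpace ℝ F] {C : ℝ} {X : Ω → E} {Y : Ω → F}

theorem aestronglyMeasurable_centralDifferenceRemainder_smul (hL : ContDiff ℝ 3 L) (θ : E)
    (hX : AEStronglyMeasurable X μ) (hY : AEStronglyMeasurable Y μ) (c : ℝ) :
    AEStronglyMeasurable (fun ω ↦ centralDifferenceRemainder L θ (X ω) c • Y ω) μ :=
  ((continuous_centralDifferenceRemainder hL θ c).comp_aestronglyMeasurable hX).smul hY

theorem norm_centralDifferenceRemainder_smul_le (hL : ContDiff ℝ 3 L)
    (hC : ∀ x, ‖iteratedFDeriv ℝ 3 L x‖ ≤ C) (θ v : E) (y : F) {c : ℝ} (hc : 0 < c) :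
    ‖centralDifferenceRemainder L θ v c • y‖ ≤ C / 6 * (‖v‖ ^ 3 * ‖y‖) := by
  rw [norm_smul, Real.norm_eq_abs]
  calc |centralDifferenceRemainder L θ v c| * ‖y‖ ≤ C * ‖v‖ ^ 3 / 6 * ‖y‖ := by
        gcongr; exact abs_centralDifferenceRemainder_le hL hC θ v hc
    _ = C / 6 * (‖v‖ ^ 3 * ‖y‖) := by ring

theorem integrable_centralDifferenceRemainder_smul (hL : ContDiff ℝ 3 L)
    (hC : ∀ x, ‖iteratedFDeriv ℝ 3 L x‖ ≤ C) (θ : E) (hX : AEStronglyMeasurable X μ)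
    (hY : AEStronglyMeasurable Y μ) (hXY : Integrable (fun ω ↦ ‖X ω‖ ^ 3 * ‖Y ω‖) μ)
    {c : ℝ} (hc : 0 < c) :
    Integrable (fun ω ↦ centralDifferenceRemainder L θ (X ω) c • Y ω) μ :=
  (hXY.const_mul (C / 6)).mono'
    (aestronglyMeasurable_centralDifferenceRemainder_smul hL θ hX hY c)
    (ae_of_all _ fun ω ↦ norm_centralDifferenceRemainder_smul_le hL hC θ (X ω) (Y ω) hc)

theorem tendsto_integral_centralDifferenceRemainder_smul [CompleteSpace F] (hL : ContDiff ℝ 3 L)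
    (hC : ∀ x, ‖iteratedFDeriv ℝ 3 L x‖ ≤ C) (θ : E) (hX : AEStronglyMeasurable X μ)
    (hY : AEStronglyMeasurable Y μ) (hXY : Integrable (fun ω ↦ ‖X ω‖ ^ 3 * ‖Y ω‖) μ) :
    Tendsto (fun c ↦ ∫ ω, centralDifferenceRemainder L θ (X ω) c • Y ω ∂μ) (𝓝[>] 0)
      (𝓝 ((6 : ℝ)⁻¹ • ∫ ω, iteratedFDeriv ℝ 3 L θ (fun _ ↦ X ω) • Y ω ∂μ)) := by
  rw [← integral_smul]
  refine tendsto_integral_filter_of_dominated_convergence _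
    (Eventually.of_forall (aestronglyMeasurable_centralDifferenceRemainder_smul hL θ hX hY))
    ?_ (hXY.const_mul (C / 6)) (ae_of_all _ fun ω ↦ ?_)
  · filter_upwards [self_mem_nhdsWithin] with c hc
    exact ae_of_all _ fun ω ↦ norm_centralDifferenceRemainder_smul_le hL hC θ (X ω) (Y ω) hc
  · simpa [smul_smul, div_eq_inv_mul] using
      (tendsto_centralDifferenceRemainder hL θ (X ω)).smul_const (Y ω)

end CentralDifference

section Isotropic

variable {Ω ι : Type*} [Fintype ι] {m0 : MeasurableSpace Ω} {μ : Measure Ω}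
  {X Y : Ω → EuclideanSpace ℝ ι}

theorem inner_smul_apply_eq_sum (a x y : EuclideanSpace ℝ ι) (i : ι) :
    (⟪a, x⟫ • y) i = ∑ j, a j * (y i * x j) := by
  simp only [PiLp.smul_apply, smul_eq_mul, PiLp.inner_apply, RCLike.inner_apply, conj_trivial,
    Finset.sum_mul]
  exact Finset.sum_congr rfl fun j _ ↦ by ring

theorem integrable_inner_smul (hXY : ∀ i j, Integrable (fun ω ↦ Y ω i * X ω j) μ)
    (a : EuclideanSpace ℝ ι) : Integrable (fun ω ↦ ⟪a, X ω⟫ • Y ω) μ :=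
  integrable_piLp_iff.2 fun i ↦ by
    simp only [inner_smul_apply_eq_sum]
    exact integrable_finsetSum _ fun j _ ↦ (hXY i j).const_mul _

theorem integral_inner_smul_eq_self [DecidableEq ι]
    (hXY : ∀ i j, Integrable (fun ω ↦ Y ω i * X ω j) μ)
    (hcov : ∀ i j, ∫ ω, Y ω i * X ω j ∂μ = if i = j then 1 else 0) (a : EuclideanSpace ℝ ι) :
    ∫ ω, ⟪a, X ω⟫ • Y ω ∂μ = a := by
  ext i
  rw [eval_integral_piLp (integrable_piLp_iff.1 (integrable_inner_smul hXY a))]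
  simp only [inner_smul_apply_eq_sum]
  rw [integral_finsetSum _ fun j _ ↦ (hXY i j).const_mul _]
  simp [integral_const_mul, hcov]

end Isotropic

theorem integral_smul_eq_zero_of_condExp_eq_zero {Ω E : Type*} {m m0 : MeasurableSpace Ω}
    {μ : Measure Ω} [NormedAddCommGroup E] [NormedSpace ℝ E] [CompleteSpace E]
    (hm : m ≤ m0) [SigmaFinite (μ.trim hm)] {f : Ω → ℝ} {g : Ω → E}
    (hf : Integrable f μ) (hfg : Integrable (f • g) μ) (hg : AEStronglyMeasurable[m] g μ)
    (hf0 : μ[f | m] =ᵐ[μ] 0) :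
    ∫ ω, f ω • g ω ∂μ = 0 := by
  change ∫ ω, (f • g) ω ∂μ = 0
  rw [← integral_condExp hm]
  refine integral_eq_zero_of_ae ?_
  filter_upwards [condExp_smul_of_aestronglyMeasurable_right hf hfg hg, hf0] with ω h h0
  simp [h, h0]

theorem vecCons_three_const {α : Type*} (a : α) : ![a, a, a] = fun _ ↦ a := by
  ext i; fin_cases i <;> rfl

section TwoQueryEstimator

variable {Ω ι : Type*} [Fintype ι] [DecidableEq ι] {m0 : MeasurableSpace Ω} {μ : Measure Ω}
  [IsFiniteMeasure μ] {L : EuclideanSpace ℝ ι → ℝ} {Δ : Ω → EuclideanSpace ℝ ι}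
  {φ : EuclideanSpace ℝ ι → EuclideanSpace ℝ ι} {εp εm : Ω → ℝ}

theorem integral_twoQueryEstimator_eq (hΔ : Measurable Δ) (hφ : Measurable φ)
    (hid_int : ∀ i j, Integrable (fun ω ↦ φ (Δ ω) i * Δ ω j) μ)
    (hid : ∀ i j, ∫ ω, φ (Δ ω) i * Δ ω j ∂μ = if i = j then 1 else 0)
    (hεp : Integrable εp μ) (hεm : Integrable εm μ)
    (hnoise : μ[fun ω ↦ εp ω - εm ω | MeasurableSpace.comap Δ inferInstance] =ᵐ[μ] 0)
    (θ : EuclideanSpace ℝ ι) {c : ℝ} (hc : c ≠ 0)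
    (hrem : Integrable (fun ω ↦ centralDifferenceRemainder L θ (Δ ω) c • φ (Δ ω)) μ)
    (hint : Integrable (fun ω ↦
      ((L (θ + c • Δ ω) + εp ω - L (θ - c • Δ ω) - εm ω) / (2 * c)) • φ (Δ ω)) μ) :
    ∫ ω, ((L (θ + c • Δ ω) + εp ω - L (θ - c • Δ ω) - εm ω) / (2 * c)) • φ (Δ ω) ∂μ =
      gradient L θ + c ^ 2 • ∫ ω, centralDifferenceRemainder L θ (Δ ω) c • φ (Δ ω) ∂μ := by
  have hsq : Integrable (fun ω ↦ c ^ 2 • (centralDifferenceRemainder L θ (Δ ω) c • φ (Δ ω))) μ :=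
    hrem.smul (c ^ 2)
  have hlin := integrable_inner_smul hid_int (gradient L θ)
  have hsplit : ∀ ω, ((L (θ + c • Δ ω) + εp ω - L (θ - c • Δ ω) - εm ω) / (2 * c)) • φ (Δ ω) =
      c ^ 2 • (centralDifferenceRemainder L θ (Δ ω) c • φ (Δ ω)) +
        ⟪gradient L θ, Δ ω⟫ • φ (Δ ω) + (2 * c)⁻¹ • ((εp ω - εm ω) • φ (Δ ω)) := fun ω ↦ by
    rw [div_two_mul_smul_eq_centralDifferenceRemainder _ _ _ _ _ _ hc, gradient,
      InnerProductSpace.toDual_symm_apply]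
  have hnoise_int : Integrable (fun ω ↦ (εp ω - εm ω) • φ (Δ ω)) μ := by
    refine (((hint.sub hsq).sub hlin).smul (2 * c)).congr (ae_of_all _ fun ω ↦ ?_)
    simp only [Pi.sub_apply, Pi.smul_apply, hsplit]
    match_scalars
    field_simp
    ring
  have hnoise_zero : ∫ ω, (εp ω - εm ω) • φ (Δ ω) ∂μ = 0 :=
    integral_smul_eq_zero_of_condExp_eq_zero hΔ.comap_le (hεp.sub hεm) hnoise_int
      (hφ.comp (comap_measurable Δ)).aestronglyMeasurable hnoise
  simp_rw [hsplit]
  rw [integral_add (g := fun ω ↦ (2 * c)⁻¹ • ((εp ω - εm ω) • φ (Δ ω))) (hsq.fun_add hlin)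
    (hnoise_int.smul (2 * c)⁻¹), integral_add hsq hlin, integral_smul,
    integral_smul, hnoise_zero, integral_inner_smul_eq_self hid_int hid, smul_zero, add_zero,
    add_comm]

end TwoQueryEstimator

theorem limit_of_rescaled_bias_of_two_query_gradient_estimator_general
    (d : ℕ)
    (L : EuclideanSpace ℝ (Fin d) → ℝ)
    (D₁ : ℝ)
    (hL : ContDiff ℝ 3 L)
    (hLbd : ∀ x, ‖iteratedFDeriv ℝ 3 L x‖ ≤ D₁)
    {Ω : Type*} {m0 : MeasurableSpace Ω} (μ : Measure Ω) [IsProbabilityMeasure μ]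
    (Δ : Ω → EuclideanSpace ℝ (Fin d)) (hΔ : Measurable Δ)
    (φ : EuclideanSpace ℝ (Fin d) → EuclideanSpace ℝ (Fin d)) (hφ : Measurable φ)
    -- `E[φ(Δ) Δᵀ] = I`
    (hid_int : ∀ i j : Fin d, Integrable (fun ω => φ (Δ ω) i * Δ ω j) μ)
    (hid : ∀ i j : Fin d, ∫ ω, φ (Δ ω) i * Δ ω j ∂μ = if i = j then (1 : ℝ) else 0)
    -- integrable noises with `E[ε⁺ − ε⁻ | Δ] = 0` a.s.
    (εp εm : Ω → ℝ) (hεp : Integrable εp μ) (hεm : Integrable εm μ)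
    (hnoise : μ[fun ω => εp ω - εm ω|MeasurableSpace.comap Δ inferInstance] =ᵐ[μ] 0)
    -- the two-query gradient estimator
    (ghat : EuclideanSpace ℝ (Fin d) → ℝ → Ω → EuclideanSpace ℝ (Fin d))
    (hghat : ∀ θ c ω, ghat θ c ω
      = ((L (θ + c • Δ ω) + εp ω - L (θ - c • Δ ω) - εm ω) / (2 * c)) • φ (Δ ω))
    -- moment bound `E[‖Δ‖³ ‖φ(Δ)‖] < ∞`
    (hmom_int : Integrable (fun ω => ‖Δ ω‖ ^ 3 * ‖φ (Δ ω)‖) μ)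
    (θ : EuclideanSpace ℝ (Fin d))
    (hint : ∀ c : ℝ, 0 < c → Integrable (ghat θ c) μ) :
    Tendsto (fun c : ℝ => (c ^ 2)⁻¹ • ((∫ ω, ghat θ c ω ∂μ) - gradient L θ))
      (𝓝[>] 0)
      (𝓝 ((6 : ℝ)⁻¹ • ∫ ω, (iteratedFDeriv ℝ 3 L θ ![Δ ω, Δ ω, Δ ω]) • φ (Δ ω) ∂μ)) := by
  have hφΔ : AEStronglyMeasurable (fun ω ↦ φ (Δ ω)) μ := (hφ.comp hΔ).aestronglyMeasurable
  have hrem : ∀ c > 0, Integrable (fun ω ↦ centralDifferenceRemainder L θ (Δ ω) c • φ (Δ ω)) μ :=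
    fun c hc ↦ integrable_centralDifferenceRemainder_smul hL hLbd θ hΔ.aestronglyMeasurable hφΔ
      hmom_int hc
  have hbias : ∀ c > 0, (c ^ 2)⁻¹ • ((∫ ω, ghat θ c ω ∂μ) - gradient L θ) =
      ∫ ω, centralDifferenceRemainder L θ (Δ ω) c • φ (Δ ω) ∂μ := fun c hc ↦ by
    have hghat_int := hint c hc
    rw [funext (hghat θ c)] at hghat_int
    simp only [hghat]
    rw [integral_twoQueryEstimator_eq hΔ hφ hid_int hid hεp hεm hnoise θ hc.ne' (hrem c hc)
      hghat_int, add_sub_cancel_left, smul_smul, inv_mul_cancel₀ (pow_ne_zero 2 hc.ne'), one_smul]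
  simp only [vecCons_three_const]
  exact (tendsto_integral_centralDifferenceRemainder_smul hL hLbd θ hΔ.aestronglyMeasurable hφΔ
    hmom_int).congr' (eventually_nhdsWithin_of_forall fun c hc ↦ (hbias c hc).symm)

/-- the rescaled bias of the two-query gradient estimator has the exact limit
`lim_{c→0⁺} c⁻² (E[ĝ(θ,c)] − ∇L(θ)) = (1/6) E[D³L(θ)(Δ,Δ,Δ) φ(Δ)]` for every `θ`. -/
theorem limit_of_rescaled_bias_of_two_query_gradient_estimator
    (d : ℕ) (hd : 1 ≤ d)
    (L : EuclideanSpace ℝ (Fin d) → ℝ)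
    (D₁ : ℝ) (hD₁ : 0 ≤ D₁)
    (hL : ContDiff ℝ 3 L)
    (hLbd : ∀ x, ‖iteratedFDeriv ℝ 3 L x‖ ≤ D₁)
    {Ω : Type*} {m0 : MeasurableSpace Ω} (μ : Measure Ω) [IsProbabilityMeasure μ]
    (Δ : Ω → EuclideanSpace ℝ (Fin d)) (hΔ : Measurable Δ)
    (φ : EuclideanSpace ℝ (Fin d) → EuclideanSpace ℝ (Fin d)) (hφ : Measurable φ)
    -- `E[φ(Δ) Δᵀ] = I`
    (hid_int : ∀ i j : Fin d, Integrable (fun ω => φ (Δ ω) i * Δ ω j) μ)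
    (hid : ∀ i j : Fin d, ∫ ω, φ (Δ ω) i * Δ ω j ∂μ = if i = j then (1 : ℝ) else 0)
    -- integrable noises with `E[ε⁺ − ε⁻ | Δ] = 0` a.s.
    (εp εm : Ω → ℝ) (hεp : Integrable εp μ) (hεm : Integrable εm μ)
    (hnoise : μ[fun ω => εp ω - εm ω|MeasurableSpace.comap Δ inferInstance] =ᵐ[μ] 0)
    -- the two-query gradient estimator
    (ghat : EuclideanSpace ℝ (Fin d) → ℝ → Ω → EuclideanSpace ℝ (Fin d))
    (hghat : ∀ θ c ω, ghat θ c ω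
      = ((L (θ + c • Δ ω) + εp ω - L (θ - c • Δ ω) - εm ω) / (2 * c)) • φ (Δ ω))
    -- moment bound `E[‖Δ‖³ ‖φ(Δ)‖] < ∞`
    (hmom_int : Integrable (fun ω => ‖Δ ω‖ ^ 3 * ‖φ (Δ ω)‖) μ)
    (θ : EuclideanSpace ℝ (Fin d))
    (hint : ∀ c : ℝ, 0 < c → Integrable (ghat θ c) μ)
    (hlim_int : Integrable
      (fun ω => (iteratedFDeriv ℝ 3 L θ ![Δ ω, Δ ω, Δ ω]) • φ (Δ ω)) μ) :
    Tendsto (fun c : ℝ => (c ^ 2)⁻¹ • ((∫ ω, ghat θ c ω ∂μ) - gradient L θ))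
      (𝓝[>] 0)
      (𝓝 ((6 : ℝ)⁻¹ • ∫ ω, (iteratedFDeriv ℝ 3 L θ ![Δ ω, Δ ω, Δ ω]) • φ (Δ ω) ∂μ)) :=
  limit_of_rescaled_bias_of_two_query_gradient_estimator_general d L D₁ hL hLbd (m0 := m0) μ Δ hΔ φ
    hφ hid_int hid εp εm hεp hεm hnoise ghat hghat hmom_int θ hint
end

section
/- Lemma 2 (second moment of the CRN gradient estimator): under the stated assumptions there is a constant C, depending only on d, D₁, D₂ and D₅, such that for every θ ∈ ℝ^d and every c ∈ (0,1], the matrix E[ĝ(θ,c)·ĝ(θ,c)ᵀ] has entries E[ĝ(θ,c)·ĝ(θ,c)ᵀ]_{ij} = 𝟙{i=j}·∫_Ω ‖𝗀(θ,ω)‖² dP(ω) + 𝟙{i≠j}·2·∫_Ω 𝗀_i(θ,ω)·𝗀_j(θ,ω) dP(ω) + r_{ij}(θ,c), where |r_{ij}(θ,c)| ≤ C·c² for all i, j; here 𝗀_i(θ,ω) denotes the i-th component of 𝗀(θ,ω) := ∇_θ ℓ(θ,ω). -/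
open MeasureTheory Filter Topology

/-!
Write `g = ∇ℓ(θ, ω)`. A third-order Taylor expansion of the symmetric difference gives
`(ℓ(θ + cΔ) - ℓ(θ - cΔ)) / (2c) = ⟪g, Δ⟫ + O(D₁ c² ‖Δ‖³)`, so
`ĝᵢ ĝⱼ = ⟪g, Δ⟫² φᵢ φⱼ + O(c² (‖Δ‖⁶ + ‖Δ‖⁴) ‖φ‖²)`, and the remainder is integrated with the
moment bounds `D₂`. By independence of `Δ` and `ω` the main term factorises as
`∑ₖ ∑ₗ E[φᵢ Δₖ Δₗ φⱼ] E[gₖ gₗ]`, which the fourth-moment identity collapses to `E‖g‖²` on the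
diagonal and to `2 E[gᵢ gⱼ]` off it.
-/

section Taylor

variable {E : Type*} [NormedAddCommGroup E] [NormedSpace ℝ E] {f : E → ℝ} {D : ℝ}

lemma norm_fderiv_fderiv_sub_le (hf : ContDiff ℝ 3 f)
    (hD : ∀ x, ‖iteratedFDeriv ℝ 3 f x‖ ≤ D) (x y : E) :
    ‖fderiv ℝ (fderiv ℝ f) y - fderiv ℝ (fderiv ℝ f) x‖ ≤ D * ‖y - x‖ := by
  have hf₂ : ContDiff ℝ 1 (fderiv ℝ (fderiv ℝ f)) :=
    (hf.fderiv_right (by norm_num)).fderiv_right le_rfl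
  refine convex_univ.norm_image_sub_le_of_norm_fderiv_le
    (fun w _ => (hf₂.differentiable (by norm_num)).differentiableAt) (fun w _ => ?_) trivial trivial
  rw [← (norm_iteratedFDeriv_zero : ‖iteratedFDeriv ℝ 0 _ w‖ = _), norm_iteratedFDeriv_fderiv,
    norm_iteratedFDeriv_fderiv, norm_iteratedFDeriv_fderiv]
  exact hD w

lemma norm_fderiv_sub_fderiv_sub_le (hf : ContDiff ℝ 3 f)
    (hD : ∀ x, ‖iteratedFDeriv ℝ 3 f x‖ ≤ D) (x y : E) :
    ‖fderiv ℝ f y - fderiv ℝ f x - fderiv ℝ (fderiv ℝ f) x (y - x)‖ ≤ D * ‖y - x‖ ^ 2 := by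
  set A := fderiv ℝ (fderiv ℝ f) x
  have hderiv (z : E) :
      HasFDerivAt (fun w => fderiv ℝ f w - A w) (fderiv ℝ (fderiv ℝ f) z - A) z :=
    (((hf.fderiv_right (m := 2) (by norm_num)).differentiable (by norm_num)).differentiableAt
      |>.hasFDerivAt).sub A.hasFDerivAt
  have hmvt := (convex_closedBall x ‖y - x‖).norm_image_sub_le_of_norm_hasFDerivWithin_le
    (fun z _ => (hderiv z).hasFDerivWithinAt)
    (fun z hz => (norm_fderiv_fderiv_sub_le hf hD x z).trans <| mul_le_mul_of_nonneg_left
      (mem_closedBall_iff_norm.1 hz) ((norm_nonneg _).trans (hD x)))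
    (Metric.mem_closedBall_self (norm_nonneg _)) (mem_closedBall_iff_norm.2 le_rfl)
  calc ‖fderiv ℝ f y - fderiv ℝ f x - A (y - x)‖
      = ‖(fderiv ℝ f y - A y) - (fderiv ℝ f x - A x)‖ := by rw [map_sub]; abel_nf
    _ ≤ D * ‖y - x‖ * ‖y - x‖ := hmvt
    _ = D * ‖y - x‖ ^ 2 := by ring

lemma abs_sub_sub_two_mul_fderiv_le (hf : ContDiff ℝ 3 f)
    (hD : ∀ x, ‖iteratedFDeriv ℝ 3 f x‖ ≤ D) (θ h : E) :
    |f (θ + h) - f (θ - h) - 2 * fderiv ℝ f θ h| ≤ 2 * D * ‖h‖ ^ 3 := by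
  set F := fderiv ℝ f
  have hdiff : Differentiable ℝ f := hf.differentiable (by norm_num)
  have hderiv (z : E) : HasFDerivAt (fun z => f (θ + z) - f (θ - z) - 2 * F θ z)
      (F (θ + z) + F (θ - z) - 2 • F θ) z := by
    have hplus := (hdiff (θ + z)).hasFDerivAt.comp z ((hasFDerivAt_id z).const_add θ)
    have hminus := (hdiff (θ - z)).hasFDerivAt.comp z ((hasFDerivAt_id z).const_sub θ)
    refine ((hplus.sub hminus).sub ((F θ).hasFDerivAt.const_mul 2)).congr_fderiv ?_
    ext v; simp [F]
  -- the derivative of the symmetric difference is a sum of two first-order Taylor remainders of `F`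
  have hbound (z : E) (hz : ‖z‖ ≤ ‖h‖) :
      ‖F (θ + z) + F (θ - z) - 2 • F θ‖ ≤ 2 * D * ‖h‖ ^ 2 := by
    have hplus := norm_fderiv_sub_fderiv_sub_le hf hD θ (θ + z)
    have hminus := norm_fderiv_sub_fderiv_sub_le hf hD θ (θ - z)
    simp only [add_sub_cancel_left, sub_sub_cancel_left, map_neg, norm_neg] at hplus hminus
    have hsq : D * ‖z‖ ^ 2 ≤ D * ‖h‖ ^ 2 := by
      gcongr
      exact (norm_nonneg _).trans (hD θ)
    calc ‖F (θ + z) + F (θ - z) - 2 • F θ‖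
        = ‖(F (θ + z) - F θ - fderiv ℝ F θ z) + (F (θ - z) - F θ - -fderiv ℝ F θ z)‖ := by
          congr 1; module
      _ ≤ D * ‖z‖ ^ 2 + D * ‖z‖ ^ 2 := norm_add_le_of_le hplus hminus
      _ ≤ 2 * D * ‖h‖ ^ 2 := by linarith
  have hmvt := (convex_closedBall (0 : E) ‖h‖).norm_image_sub_le_of_norm_hasFDerivWithin_le
    (fun z _ => (hderiv z).hasFDerivWithinAt)
    (fun z hz => hbound z (mem_closedBall_zero_iff.1 hz))
    (Metric.mem_closedBall_self (norm_nonneg _)) (mem_closedBall_zero_iff.2 le_rfl)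
  simp only [add_zero, sub_zero, sub_self, map_zero, mul_zero, Real.norm_eq_abs] at hmvt
  calc _ ≤ 2 * D * ‖h‖ ^ 2 * ‖h‖ := hmvt
    _ = 2 * D * ‖h‖ ^ 3 := by ring

end Taylor

lemma aemeasurable_fderiv_apply {E Ω : Type*} [NormedAddCommGroup E] [NormedSpace ℝ E]
    [MeasurableSpace E] [MeasurableSpace Ω] {μ : Measure Ω} {f : E → Ω → ℝ}
    (hf : Measurable (fun p : E × Ω => f p.1 p.2)) {θ : E}
    (hdiff : ∀ᵐ ω ∂μ, DifferentiableAt ℝ (f · ω) θ) (v : E) :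
    AEMeasurable (fun ω => fderiv ℝ (f · ω) θ v) μ :=
  aemeasurable_of_tendsto_metrizable_ae atTop
    (fun n : ℕ => (((hf.comp measurable_prodMk_left).sub
      (hf.comp measurable_prodMk_left)).const_smul (n : ℝ)).aemeasurable)
    (hdiff.mono fun _ h => h.hasFDerivAt.lim v (by simpa using tendsto_natCast_atTop_atTop))

lemma EuclideanSpace.gradient_apply {ι : Type*} [Fintype ι] [DecidableEq ι]
    (f : EuclideanSpace ℝ ι → ℝ) (θ : EuclideanSpace ℝ ι) (k : ι) :
    gradient f θ k = fderiv ℝ f θ (EuclideanSpace.single k 1) := by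
  rw [← inner_gradient_left, EuclideanSpace.inner_single_right]
  simp

lemma integrable_gradient_apply_mul_gradient_apply {ι Ω : Type*} [Fintype ι]
    [MeasurableSpace Ω] {P : Measure Ω} [IsFiniteMeasure P] {f : EuclideanSpace ℝ ι → Ω → ℝ}
    (hf : Measurable (fun p : EuclideanSpace ℝ ι × Ω => f p.1 p.2)) {θ : EuclideanSpace ℝ ι}
    (hdiff : ∀ᵐ ω ∂P, DifferentiableAt ℝ (f · ω) θ) {B : ℝ}
    (hB : ∀ᵐ ω ∂P, ∀ k, |gradient (f · ω) θ k| ≤ B) (k l : ι) :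
    Integrable (fun ω => gradient (f · ω) θ k * gradient (f · ω) θ l) P := by
  classical
  have hmeas (k : ι) : AEMeasurable (fun ω => gradient (f · ω) θ k) P := by
    simp only [EuclideanSpace.gradient_apply]
    exact aemeasurable_fderiv_apply hf hdiff _
  refine (integrable_const (B * B)).mono' ((hmeas k).mul (hmeas l)).aestronglyMeasurable ?_
  filter_upwards [hB] with ω h
  rw [Real.norm_eq_abs, abs_mul]
  exact mul_le_mul (h k) (h l) (abs_nonneg _) ((abs_nonneg _).trans (h k))

lemma abs_inner_le_card_mul {ι : Type*} [Fintype ι] {g : EuclideanSpace ℝ ι} {B : ℝ}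
    (hg : ∀ k, |g k| ≤ B) (v : EuclideanSpace ℝ ι) :
    |inner ℝ g v| ≤ Fintype.card ι * B * ‖v‖ := by
  calc |inner ℝ g v| = |∑ k, g k * v k| := by simp [PiLp.inner_apply, mul_comm]
    _ ≤ ∑ k, |g k * v k| := Finset.abs_sum_le_sum_abs _ _
    _ ≤ ∑ _k : ι, B * ‖v‖ := Finset.sum_le_sum fun k _ => by
        rw [abs_mul]
        exact mul_le_mul (hg k) (PiLp.norm_apply_le v k) (abs_nonneg _)
          ((abs_nonneg _).trans (hg k))
    _ = Fintype.card ι * B * ‖v‖ := by simp [mul_assoc]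

section CentralDifference

variable {E : Type*} [NormedAddCommGroup E] [NormedSpace ℝ E]

noncomputable def centralDifferenceQuotient (f : E → ℝ) (θ v : E) (c : ℝ) : ℝ :=
  (f (θ + c • v) - f (θ - c • v)) / (2 * c)

variable {f : E → ℝ} {D c : ℝ}

lemma abs_centralDifferenceQuotient_sub_fderiv_le (hf : ContDiff ℝ 3 f)
    (hD : ∀ x, ‖iteratedFDeriv ℝ 3 f x‖ ≤ D) (hc : 0 < c) (θ v : E) :
    |centralDifferenceQuotient f θ v c - fderiv ℝ f θ v| ≤ D * c ^ 2 * ‖v‖ ^ 3 := by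
  have hTaylor := abs_sub_sub_two_mul_fderiv_le hf hD θ (c • v)
  rw [map_smul, smul_eq_mul, norm_smul, Real.norm_of_nonneg hc.le] at hTaylor
  have hquot : centralDifferenceQuotient f θ v c - fderiv ℝ f θ v
      = (f (θ + c • v) - f (θ - c • v) - 2 * (c * fderiv ℝ f θ v)) / (2 * c) := by
    rw [centralDifferenceQuotient]
    field_simp
  rw [hquot, abs_div, abs_of_pos (by positivity : (0 : ℝ) < 2 * c), div_le_iff₀ (by positivity)]
  calc _ ≤ 2 * D * (c * ‖v‖) ^ 3 := hTaylor
    _ = D * c ^ 2 * ‖v‖ ^ 3 * (2 * c) := by ring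

lemma measurable_centralDifferenceQuotient [MeasurableSpace E] [BorelSpace E]
    {X Ω : Type*} [MeasurableSpace X] [MeasurableSpace Ω] {f : E → Ω → ℝ}
    (hf : Measurable (fun p : E × Ω => f p.1 p.2)) {Δ : X → E} (hΔ : Measurable Δ) (θ : E) (c : ℝ) :
    Measurable (fun p : X × Ω => centralDifferenceQuotient (f · p.2) θ (Δ p.1) c) := by
  unfold centralDifferenceQuotient
  fun_prop

end CentralDifference

lemma abs_sq_centralDifferenceQuotient_sub_sq_inner_le {ι : Type*} [Fintype ι]
    {f : EuclideanSpace ℝ ι → ℝ} {D₁ D₅ c : ℝ} (hf : ContDiff ℝ 3 f)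
    (hD₁ : ∀ x, ‖iteratedFDeriv ℝ 3 f x‖ ≤ D₁) {θ : EuclideanSpace ℝ ι}
    (hD₅ : ∀ k, |gradient f θ k| ≤ D₅) (hc : 0 < c) (hc₁ : c ≤ 1) (v : EuclideanSpace ℝ ι) :
    |centralDifferenceQuotient f θ v c ^ 2 - inner ℝ (gradient f θ) v ^ 2|
      ≤ c ^ 2 * (D₁ ^ 2 * ‖v‖ ^ 6 + 2 * Fintype.card ι * D₅ * D₁ * ‖v‖ ^ 4) := by
  have hab := abs_centralDifferenceQuotient_sub_fderiv_le hf hD₁ hc θ v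
  rw [← inner_gradient_left] at hab
  set a := centralDifferenceQuotient f θ v c
  set b := inner ℝ (gradient f θ) v
  have hb := abs_inner_le_card_mul hD₅ v
  have hD₁0 : 0 ≤ D₁ := (norm_nonneg _).trans (hD₁ θ)
  have hc2 : c ^ 2 ≤ 1 := pow_le_one₀ hc.le hc₁
  have hapb : |a + b| ≤ D₁ * ‖v‖ ^ 3 + 2 * (Fintype.card ι * D₅ * ‖v‖) := by
    calc |a + b| = |(a - b) + 2 * b| := by ring_nf
      _ ≤ |a - b| + 2 * |b| := by rw [← abs_two, ← abs_mul, abs_two]; exact abs_add_le _ _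
      _ ≤ D₁ * ‖v‖ ^ 3 + 2 * (Fintype.card ι * D₅ * ‖v‖) := by
        gcongr
        exact hab.trans (by nlinarith [mul_nonneg hD₁0 (pow_nonneg (norm_nonneg v) 3)])
  calc |a ^ 2 - b ^ 2| = |a - b| * |a + b| := by rw [← abs_mul]; ring_nf
    _ ≤ (D₁ * c ^ 2 * ‖v‖ ^ 3) * (D₁ * ‖v‖ ^ 3 + 2 * (Fintype.card ι * D₅ * ‖v‖)) :=
        mul_le_mul hab hapb (abs_nonneg _) (by positivity)
    _ = _ := by ring

lemma abs_centralDifferenceQuotient_smul_apply_mul_sub_le {ι : Type*} [Fintype ι]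
    {f : EuclideanSpace ℝ ι → ℝ} {D₁ D₅ c : ℝ} (hf : ContDiff ℝ 3 f)
    (hD₁ : ∀ x, ‖iteratedFDeriv ℝ 3 f x‖ ≤ D₁) {θ : EuclideanSpace ℝ ι}
    (hD₅ : ∀ k, |gradient f θ k| ≤ D₅) (hc : 0 < c) (hc₁ : c ≤ 1) (v w : EuclideanSpace ℝ ι)
    (i j : ι) :
    |(centralDifferenceQuotient f θ v c • w) i * (centralDifferenceQuotient f θ v c • w) j
        - inner ℝ (gradient f θ) v ^ 2 * (w i * w j)|
      ≤ c ^ 2 * (D₁ ^ 2 * ‖v‖ ^ 6 + 2 * Fintype.card ι * D₅ * D₁ * ‖v‖ ^ 4) * ‖w‖ ^ 2 := by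
  have hw : |w i * w j| ≤ ‖w‖ ^ 2 := by
    rw [abs_mul, sq]
    exact mul_le_mul (PiLp.norm_apply_le w i) (PiLp.norm_apply_le w j) (abs_nonneg _)
      (norm_nonneg _)
  calc _ = |centralDifferenceQuotient f θ v c ^ 2 - inner ℝ (gradient f θ) v ^ 2|
        * |w i * w j| := by
        rw [← abs_mul, PiLp.smul_apply, PiLp.smul_apply, smul_eq_mul, smul_eq_mul]; ring_nf
    _ ≤ _ := by
        have hsq := abs_sq_centralDifferenceQuotient_sub_sq_inner_le hf hD₁ hD₅ hc hc₁ v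
        exact mul_le_mul hsq hw (abs_nonneg _) ((abs_nonneg _).trans hsq)

section Rademacher

variable {ι : Type*} [Fintype ι] [DecidableEq ι]

/-- `E[Δᵢ Δₚ Δ_q Δⱼ]` for a vector `Δ` of independent Rademacher signs. -/
def rademacherFourthMoment (i j p q : ι) : ℝ :=
  (if i = j ∧ p = q then 1 else 0)
    + (if i ≠ j then (if p = i ∧ q = j then 1 else 0) + (if p = j ∧ q = i then 1 else 0) else 0)

lemma sum_sum_rademacherFourthMoment_mul {G : ι → ι → ℝ} (hG : ∀ k l, G k l = G l k)
    (i j : ι) :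
    ∑ k, ∑ l, rademacherFourthMoment i j k l * G k l
      = (if i = j then ∑ k, G k k else 0) + (if i ≠ j then 2 * G i j else 0) := by
  by_cases hij : i = j
  · subst hij
    simp [rademacherFourthMoment, Finset.sum_ite_eq]
  · simp [rademacherFourthMoment, hij, add_mul, ite_and, Finset.sum_add_distrib, hG j i]
    ring

end Rademacher

section SecondMoment

variable {ι : Type*} [Fintype ι]

lemma inner_sq_mul_mul_eq_sum_sum (u v w : EuclideanSpace ℝ ι) (i j : ι) :
    inner ℝ u v ^ 2 * (w i * w j) = ∑ k, ∑ l, (w i * v k * v l * w j) * (u k * u l) := by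
  simp only [PiLp.inner_apply, RCLike.inner_apply, conj_trivial]
  rw [sq, Finset.sum_mul_sum, Finset.sum_mul]
  refine Finset.sum_congr rfl fun k _ => ?_
  rw [Finset.sum_mul]
  exact Finset.sum_congr rfl fun l _ => by ring

variable {X Ω : Type*} [MeasurableSpace X] [MeasurableSpace Ω] {μ : Measure X} {P : Measure Ω}
  {Δ ψ : X → EuclideanSpace ℝ ι} {G : Ω → EuclideanSpace ℝ ι} {i j : ι}

lemma integrable_inner_sq_mul_mul_prod
    (hΔ : ∀ k l, Integrable (fun x => ψ x i * Δ x k * Δ x l * ψ x j) μ)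
    (hG : ∀ k l, Integrable (fun ω => G ω k * G ω l) P) :
    Integrable (fun p : X × Ω => inner ℝ (G p.2) (Δ p.1) ^ 2 * (ψ p.1 i * ψ p.1 j))
      (μ.prod P) := by
  simp_rw [inner_sq_mul_mul_eq_sum_sum]
  exact integrable_finsetSum _ fun k _ => integrable_finsetSum _ fun l _ =>
    (hΔ k l).mul_prod (hG k l)

lemma integral_inner_sq_mul_mul_prod [SFinite μ] [SFinite P]
    (hΔ : ∀ k l, Integrable (fun x => ψ x i * Δ x k * Δ x l * ψ x j) μ)
    (hG : ∀ k l, Integrable (fun ω => G ω k * G ω l) P) :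
    ∫ p, inner ℝ (G p.2) (Δ p.1) ^ 2 * (ψ p.1 i * ψ p.1 j) ∂(μ.prod P)
      = ∑ k, ∑ l, (∫ x, ψ x i * Δ x k * Δ x l * ψ x j ∂μ) * ∫ ω, G ω k * G ω l ∂P := by
  simp_rw [inner_sq_mul_mul_eq_sum_sum]
  rw [integral_finsetSum _ fun k _ => integrable_finsetSum _ fun l _ =>
    (hΔ k l).mul_prod (hG k l)]
  refine Finset.sum_congr rfl fun k _ => ?_
  rw [integral_finsetSum _ fun l _ => (hΔ k l).mul_prod (hG k l)]
  exact Finset.sum_congr rfl fun l _ =>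
    integral_prod_mul (fun x => ψ x i * Δ x k * Δ x l * ψ x j) (fun ω => G ω k * G ω l)

lemma integral_inner_sq_mul_mul_eq [SFinite μ] [SFinite P] [DecidableEq ι]
    (hΔ : ∀ k l, Integrable (fun x => ψ x i * Δ x k * Δ x l * ψ x j) μ)
    (h4 : ∀ k l, ∫ x, ψ x i * Δ x k * Δ x l * ψ x j ∂μ = rademacherFourthMoment i j k l)
    (hG : ∀ k l, Integrable (fun ω => G ω k * G ω l) P) :
    ∫ p, inner ℝ (G p.2) (Δ p.1) ^ 2 * (ψ p.1 i * ψ p.1 j) ∂(μ.prod P)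
      = (if i = j then ∫ ω, ‖G ω‖ ^ 2 ∂P else 0)
        + (if i ≠ j then 2 * ∫ ω, G ω i * G ω j ∂P else 0) := by
  have hnorm : ∫ ω, ‖G ω‖ ^ 2 ∂P = ∑ k, ∫ ω, G ω k * G ω k ∂P := by
    simp_rw [EuclideanSpace.real_norm_sq_eq, sq]
    exact integral_finsetSum _ fun k _ => hG k k
  simp_rw [integral_inner_sq_mul_mul_prod hΔ hG, h4, hnorm]
  exact sum_sum_rademacherFourthMoment_mul (fun k l => by simp_rw [mul_comm]) i j

end SecondMoment

lemma abs_integral_sub_integral_le {α : Type*} [MeasurableSpace α] {μ : Measure α}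
    {f g h : α → ℝ} (hf : AEStronglyMeasurable f μ) (hg : Integrable g μ) (hh : Integrable h μ)
    (hfg : ∀ᵐ x ∂μ, |f x - g x| ≤ h x) :
    |∫ x, f x ∂μ - ∫ x, g x ∂μ| ≤ ∫ x, h x ∂μ := by
  have hdiff : Integrable (f - g) μ := hh.mono' (hf.sub hg.aestronglyMeasurable) hfg
  rw [← integral_sub (by simpa using hdiff.add hg) hg]
  exact norm_integral_le_of_norm_le hh (f := fun x => f x - g x) hfg

lemma abs_integral_centralDifferenceQuotient_smul_sub_le {ι X Ω : Type*} [Fintype ι]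
    [MeasurableSpace X] [MeasurableSpace Ω] {μ : Measure X} {P : Measure Ω}
    [SFinite μ] [IsProbabilityMeasure P] {f : EuclideanSpace ℝ ι → Ω → ℝ}
    (hf : Measurable (fun p : EuclideanSpace ℝ ι × Ω => f p.1 p.2)) {θ : EuclideanSpace ℝ ι}
    {D₁ D₅ c : ℝ} (hfae : ∀ᵐ ω ∂P, ContDiff ℝ 3 (f · ω) ∧
      (∀ x, ‖iteratedFDeriv ℝ 3 (f · ω) x‖ ≤ D₁) ∧ ∀ k, |gradient (f · ω) θ k| ≤ D₅)
    {Δ ψ : X → EuclideanSpace ℝ ι} (hΔ : Measurable Δ) (hψ : Measurable ψ)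
    (hmoment₆ : Integrable (fun x => ‖Δ x‖ ^ 6 * ‖ψ x‖ ^ 2) μ)
    (hmoment₄ : Integrable (fun x => ‖Δ x‖ ^ 4 * ‖ψ x‖ ^ 2) μ) {i j : ι}
    (hT : Integrable (fun p : X × Ω =>
      inner ℝ (gradient (f · p.2) θ) (Δ p.1) ^ 2 * (ψ p.1 i * ψ p.1 j)) (μ.prod P))
    (hc : 0 < c) (hc₁ : c ≤ 1) :
    |∫ p, (centralDifferenceQuotient (f · p.2) θ (Δ p.1) c • ψ p.1) i
          * (centralDifferenceQuotient (f · p.2) θ (Δ p.1) c • ψ p.1) j ∂(μ.prod P)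
        - ∫ p, inner ℝ (gradient (f · p.2) θ) (Δ p.1) ^ 2 * (ψ p.1 i * ψ p.1 j) ∂(μ.prod P)|
      ≤ c ^ 2 * (D₁ ^ 2 * ∫ x, ‖Δ x‖ ^ 6 * ‖ψ x‖ ^ 2 ∂μ
        + 2 * Fintype.card ι * D₅ * D₁ * ∫ x, ‖Δ x‖ ^ 4 * ‖ψ x‖ ^ 2 ∂μ) := by
  set W : X → ℝ := fun x => D₁ ^ 2 * (‖Δ x‖ ^ 6 * ‖ψ x‖ ^ 2)
    + 2 * Fintype.card ι * D₅ * D₁ * (‖Δ x‖ ^ 4 * ‖ψ x‖ ^ 2)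
  have hW : Integrable W μ := (hmoment₆.const_mul _).add (hmoment₄.const_mul _)
  have herr : ∀ᵐ p ∂(μ.prod P),
      |(centralDifferenceQuotient (f · p.2) θ (Δ p.1) c • ψ p.1) i
          * (centralDifferenceQuotient (f · p.2) θ (Δ p.1) c • ψ p.1) j
        - inner ℝ (gradient (f · p.2) θ) (Δ p.1) ^ 2 * (ψ p.1 i * ψ p.1 j)| ≤ c ^ 2 * W p.1 := by
    filter_upwards [Measure.quasiMeasurePreserving_snd.ae hfae] with p ⟨hsmooth, hD₁, hD₅⟩
    refine (abs_centralDifferenceQuotient_smul_apply_mul_sub_le hsmooth hD₁ hD₅ hc hc₁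
      (Δ p.1) (ψ p.1) i j).trans_eq ?_
    ring
  have hmeas := measurable_centralDifferenceQuotient hf hΔ θ c
  calc _ ≤ ∫ p, c ^ 2 * W p.1 ∂(μ.prod P) :=
        abs_integral_sub_integral_le (by fun_prop) hT ((hW.comp_fst P).const_mul _) herr
    _ = c ^ 2 * ∫ x, W x ∂μ := by rw [integral_const_mul, integral_fun_fst]; simp
    _ = _ := by rw [integral_add (hmoment₆.const_mul _) (hmoment₄.const_mul _), integral_const_mul,
        integral_const_mul]

theorem second_moment_of_crn_gradient_estimator_general
    (d : ℕ)
    (D₁ D₂ D₅ : ℝ) (hD₁ : 0 ≤ D₁) (hD₅ : 0 ≤ D₅) :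
    ∃ C : ℝ,
      ∀ (Ω' : Type) (mΩ' : MeasurableSpace Ω') (P : Measure Ω'), IsProbabilityMeasure P →
      ∀ ℓ : EuclideanSpace ℝ (Fin d) → Ω' → ℝ,
        Measurable (fun p : EuclideanSpace ℝ (Fin d) × Ω' => ℓ p.1 p.2) →
        (∀ᵐ ω' ∂P, ContDiff ℝ 3 (fun θ => ℓ θ ω') ∧
          (∀ θ, ‖iteratedFDeriv ℝ 3 (fun θ' => ℓ θ' ω') θ‖ ≤ D₁) ∧
          (∀ θ, ∀ i : Fin d, |gradient (fun θ' => ℓ θ' ω') θ i| ≤ D₅)) →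
      ∀ (Ωd : Type) (mΩd : MeasurableSpace Ωd) (μd : Measure Ωd), IsProbabilityMeasure μd →
      ∀ Δ : Ωd → EuclideanSpace ℝ (Fin d), Measurable Δ →
      ∀ φ : EuclideanSpace ℝ (Fin d) → EuclideanSpace ℝ (Fin d), Measurable φ →
        -- `E[φ(Δ) Δᵀ] = I`
        (∀ i j : Fin d, Integrable (fun ωd => φ (Δ ωd) i * Δ ωd j) μd) →
        (∀ i j : Fin d,
          ∫ ωd, φ (Δ ωd) i * Δ ωd j ∂μd = if i = j then (1 : ℝ) else 0) →
        -- moment bounds `E[‖Δ‖^(2j) ‖φ(Δ)‖²] ≤ D₂`, `j = 0,1,2,3`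
        (∀ j : ℕ, j ≤ 3 → Integrable (fun ωd => ‖Δ ωd‖ ^ (2 * j) * ‖φ (Δ ωd)‖ ^ 2) μd) →
        (∀ j : ℕ, j ≤ 3 → ∫ ωd, ‖Δ ωd‖ ^ (2 * j) * ‖φ (Δ ωd)‖ ^ 2 ∂μd ≤ D₂) →
        -- fourth-moment identity
        (∀ i j p q : Fin d,
          Integrable (fun ωd => φ (Δ ωd) i * Δ ωd p * Δ ωd q * φ (Δ ωd) j) μd) →
        (∀ i j p q : Fin d,
          ∫ ωd, φ (Δ ωd) i * Δ ωd p * Δ ωd q * φ (Δ ωd) j ∂μd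
            = (if i = j ∧ p = q then (1 : ℝ) else 0)
              + (if i ≠ j then
                  ((if p = i ∧ q = j then (1 : ℝ) else 0)
                    + (if p = j ∧ q = i then (1 : ℝ) else 0))
                else 0)) →
      -- the CRN gradient estimator, on the product space `Ωd × Ω'`
      ∀ ghat : EuclideanSpace ℝ (Fin d) → ℝ → Ωd × Ω' → EuclideanSpace ℝ (Fin d),
        (∀ θ c p, ghat θ c p
          = ((ℓ (θ + c • Δ p.1) p.2 - ℓ (θ - c • Δ p.1) p.2) / (2 * c)) • φ (Δ p.1)) →
      ∀ (θ : EuclideanSpace ℝ (Fin d)) (c : ℝ), 0 < c → c ≤ 1 →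
      ∀ i j : Fin d,
        |(∫ p, ghat θ c p i * ghat θ c p j ∂(μd.prod P))
            - ((if i = j then ∫ ω', ‖gradient (fun θ' => ℓ θ' ω') θ‖ ^ 2 ∂P else 0)
              + (if i ≠ j then
                  2 * ∫ ω', (gradient (fun θ' => ℓ θ' ω') θ i)
                        * (gradient (fun θ' => ℓ θ' ω') θ j) ∂P
                else 0))|
          ≤ C * c ^ 2 := by
  refine ⟨D₁ ^ 2 * D₂ + 2 * d * D₅ * D₁ * D₂, ?_⟩
  intro Ω' _ P _ ℓ hℓ hℓae Ωd _ μd _ Δ hΔ φ hφ _ _ hmoment_int hmoment h4int h4 ghat hghat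
    θ c hc hc₁ i j
  have hG (k l : Fin d) := integrable_gradient_apply_mul_gradient_apply hℓ
    (hℓae.mono fun _ h => (h.1.differentiable (by norm_num)).differentiableAt)
    (hℓae.mono fun _ h => h.2.2 θ) k l
  have hmoment₆ : Integrable (fun x => ‖Δ x‖ ^ 6 * ‖φ (Δ x)‖ ^ 2) μd := hmoment_int 3 le_rfl
  have hmoment₄ : Integrable (fun x => ‖Δ x‖ ^ 4 * ‖φ (Δ x)‖ ^ 2) μd := hmoment_int 2 (by norm_num)
  have hT := integrable_inner_sq_mul_mul_prod (G := fun ω => gradient (ℓ · ω) θ) (h4int i j) hG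
  have hremainder := abs_integral_centralDifferenceQuotient_smul_sub_le (ψ := fun x => φ (Δ x)) hℓ
    (hℓae.mono fun _ h => ⟨h.1, h.2.1, h.2.2 θ⟩) hΔ (hφ.comp hΔ) hmoment₆ hmoment₄ hT hc hc₁
  rw [funext (hghat θ c), ← integral_inner_sq_mul_mul_eq (h4int i j) (h4 i j) hG]
  refine hremainder.trans ?_
  rw [Fintype.card_fin, mul_comm _ (c ^ 2)]
  gcongr
  exacts [hmoment 3 le_rfl, hmoment 2 (by norm_num)]

/-- Lemma 2, second moment of the CRN gradient estimator: there is a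
constant `C`, depending only on `d`, `D₁`, `D₂` and `D₅`, such that for every random loss
`ℓ` (with a.e. bounded third derivative and a.e. `‖∇ℓ‖_∞ ≤ D₅`), every perturbation `Δ`
independent of `ω ∼ P` with a map `φ` satisfying the identity, moment and fourth-moment
conditions, every `θ` and every `c ∈ (0,1]`, each entry of `E[ĝ(θ,c) ĝ(θ,c)ᵀ]` equals the
stated diagonal/off-diagonal main term up to a remainder bounded by `C c²`. -/
theorem second_moment_of_crn_gradient_estimator
    (d : ℕ) (hd : 1 ≤ d)
    (D₁ D₂ D₅ : ℝ) (hD₁ : 0 ≤ D₁) (hD₂ : 0 ≤ D₂) (hD₅ : 0 ≤ D₅) :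
    ∃ C : ℝ,
      ∀ (Ω' : Type) (mΩ' : MeasurableSpace Ω') (P : Measure Ω'), IsProbabilityMeasure P →
      ∀ ℓ : EuclideanSpace ℝ (Fin d) → Ω' → ℝ,
        Measurable (fun p : EuclideanSpace ℝ (Fin d) × Ω' => ℓ p.1 p.2) →
        (∀ᵐ ω' ∂P, ContDiff ℝ 3 (fun θ => ℓ θ ω') ∧
          (∀ θ, ‖iteratedFDeriv ℝ 3 (fun θ' => ℓ θ' ω') θ‖ ≤ D₁) ∧
          (∀ θ, ∀ i : Fin d, |gradient (fun θ' => ℓ θ' ω') θ i| ≤ D₅)) →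
      ∀ (Ωd : Type) (mΩd : MeasurableSpace Ωd) (μd : Measure Ωd), IsProbabilityMeasure μd →
      ∀ Δ : Ωd → EuclideanSpace ℝ (Fin d), Measurable Δ →
      ∀ φ : EuclideanSpace ℝ (Fin d) → EuclideanSpace ℝ (Fin d), Measurable φ →
        -- `E[φ(Δ) Δᵀ] = I`
        (∀ i j : Fin d, Integrable (fun ωd => φ (Δ ωd) i * Δ ωd j) μd) →
        (∀ i j : Fin d,
          ∫ ωd, φ (Δ ωd) i * Δ ωd j ∂μd = if i = j then (1 : ℝ) else 0) →
        -- moment bounds `E[‖Δ‖^(2j) ‖φ(Δ)‖²] ≤ D₂`, `j = 0,1,2,3`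
        (∀ j : ℕ, j ≤ 3 → Integrable (fun ωd => ‖Δ ωd‖ ^ (2 * j) * ‖φ (Δ ωd)‖ ^ 2) μd) →
        (∀ j : ℕ, j ≤ 3 → ∫ ωd, ‖Δ ωd‖ ^ (2 * j) * ‖φ (Δ ωd)‖ ^ 2 ∂μd ≤ D₂) →
        -- fourth-moment identity
        (∀ i j p q : Fin d,
          Integrable (fun ωd => φ (Δ ωd) i * Δ ωd p * Δ ωd q * φ (Δ ωd) j) μd) →
        (∀ i j p q : Fin d,
          ∫ ωd, φ (Δ ωd) i * Δ ωd p * Δ ωd q * φ (Δ ωd) j ∂μd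
            = (if i = j ∧ p = q then (1 : ℝ) else 0)
              + (if i ≠ j then
                  ((if p = i ∧ q = j then (1 : ℝ) else 0)
                    + (if p = j ∧ q = i then (1 : ℝ) else 0))
                else 0)) →
      -- the CRN gradient estimator, on the product space `Ωd × Ω'`
      ∀ ghat : EuclideanSpace ℝ (Fin d) → ℝ → Ωd × Ω' → EuclideanSpace ℝ (Fin d),
        (∀ θ c p, ghat θ c p
          = ((ℓ (θ + c • Δ p.1) p.2 - ℓ (θ - c • Δ p.1) p.2) / (2 * c)) • φ (Δ p.1)) →
      ∀ (θ : EuclideanSpace ℝ (Fin d)) (c : ℝ), 0 < c → c ≤ 1 →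
      ∀ i j : Fin d,
        |(∫ p, ghat θ c p i * ghat θ c p j ∂(μd.prod P))
            - ((if i = j then ∫ ω', ‖gradient (fun θ' => ℓ θ' ω') θ‖ ^ 2 ∂P else 0)
              + (if i ≠ j then
                  2 * ∫ ω', (gradient (fun θ' => ℓ θ' ω') θ i)
                        * (gradient (fun θ' => ℓ θ' ω') θ j) ∂P
                else 0))|
          ≤ C * c ^ 2 :=
  second_moment_of_crn_gradient_estimator_general d D₁ D₂ D₅ hD₁ hD₅
end
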